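/- arXiv:math/0611803 — 3 statements merged into one kernel-verified Lean document; each statement's English description precedes it below -/
import Mathlib

section
/- For a rack X and a ∈ X, the maps (-1)^{n+1} h_a, where h_a(x_1,...,x_n) = (x_1,...,x_n,a), form a chain homotopy between the identity and the chain map *_a (applying *a to all coordinates); that is, ∂∘((-1)^{n+1}h_a) + ((-1)^n h_a)∘∂ = Id - *_a on C_n^R(X). -/
/-!
On `C_n^R(X)`, appending `a` commutes with every face of the rack boundary except the last one,
which deletes `a` again and contributes `(-1)^(n+1) (x - x * a)`. Hence
`∂ h_a = h_a ∂ + (-1)^(n+1) (Id - *_a)`, and multiplying by `(-1)^(n+1)` gives the homotopy formula.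
-/

/-- Delete the `i`-th coordinate of a tuple. -/
def delF {X : Type*} {n : ℕ} (i : Fin (n + 1)) (x : Fin (n + 1) → X) : Fin n → X :=
  fun j => x (i.succAbove j)

/-- Delete the `i`-th coordinate, acting by `* x_i` on the earlier coordinates. -/
def delS {X : Type*} (op : X → X → X) {n : ℕ} (i : Fin (n + 1)) (x : Fin (n + 1) → X) :
    Fin n → X :=
  fun j => if (j : ℕ) < (i : ℕ) then op (x (Fin.castSucc j)) (x i) else x (i.succAbove j)

/-- The rack boundary of a generator (tuples indexed from 0; the paper's index `i ∈ {2,…,n}`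
corresponds to `i ∈ {1,…,n}` here, with sign `(-1)^(i+1)`). -/
noncomputable def bdryGen {X : Type*} (op : X → X → X) {n : ℕ} (x : Fin (n + 1) → X) :
    (Fin n → X) →₀ ℤ :=
  ∑ i : Fin (n + 1), if (i : ℕ) = 0 then 0 else
    ((-1 : ℤ) ^ ((i : ℕ) + 1)) •
      (Finsupp.single (delF i x) 1 - Finsupp.single (delS op i x) 1)

/-- The rack boundary map `∂ : C^R_{n+1}(X) → C^R_n(X)`. -/
noncomputable def bdry {X : Type*} (op : X → X → X) (n : ℕ) :
    ((Fin (n + 1) → X) →₀ ℤ) →ₗ[ℤ] ((Fin n → X) →₀ ℤ) :=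
  Finsupp.lsum ℤ fun x => LinearMap.toSpanSingleton ℤ _ (bdryGen op x)

/-- The chain map `*_a`, applying `* a` to every coordinate. -/
noncomputable def starMap {X : Type*} (op : X → X → X) (a : X) (m : ℕ) :
    ((Fin m → X) →₀ ℤ) →ₗ[ℤ] ((Fin m → X) →₀ ℤ) :=
  Finsupp.lsum ℤ fun x =>
    LinearMap.toSpanSingleton ℤ _ (Finsupp.single (fun j => op (x j) a) 1)

/-- The map `h_a`, appending `a` as the last coordinate. -/
noncomputable def hmap {X : Type*} (a : X) (m : ℕ) :
    ((Fin m → X) →₀ ℤ) →ₗ[ℤ] ((Fin (m + 1) → X) →₀ ℤ) :=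
  Finsupp.lsum ℤ fun x => LinearMap.toSpanSingleton ℤ _ (Finsupp.single (Fin.snoc x a) 1)

section RackChains

variable {X : Type*}

section Faces

variable {n : ℕ} (x : Fin (n + 1) → X) (a : X)

lemma delF_castSucc_snoc (i : Fin (n + 1)) :
    delF i.castSucc (Fin.snoc x a) = Fin.snoc (delF i x) a := by
  funext j
  induction j using Fin.lastCases with
  | last => simp [delF, Fin.succAbove_castSucc_of_le i (Fin.last n) (Fin.le_last i)]
  | cast j => simp [delF, Fin.castSucc_succAbove_castSucc]

lemma delS_castSucc_snoc (op : X → X → X) (i : Fin (n + 1)) :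
    delS op i.castSucc (Fin.snoc x a) = Fin.snoc (delS op i x) a := by
  funext j
  induction j using Fin.lastCases with
  | last =>
    simp [delS, Fin.succAbove_castSucc_of_le i (Fin.last n) (Fin.le_last i), i.is_le]
  | cast j => simp [delS, Fin.castSucc_succAbove_castSucc]

lemma delF_last_snoc : delF (Fin.last (n + 1)) (Fin.snoc x a) = x := by
  funext j
  simp [delF]

lemma delS_last_snoc (op : X → X → X) :
    delS op (Fin.last (n + 1)) (Fin.snoc x a) = fun j => op (x j) a := by
  funext j
  simp [delS, j.is_lt]

end Faces

@[simp]
lemma bdry_single (op : X → X → X) {n : ℕ} (x : Fin (n + 1) → X) :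
    bdry op n (Finsupp.single x 1) = bdryGen op x := by
  simp [bdry]

@[simp]
lemma hmap_single (a : X) {n : ℕ} (x : Fin n → X) :
    hmap a n (Finsupp.single x 1) = Finsupp.single (Fin.snoc x a) 1 := by
  simp [hmap]

@[simp]
lemma starMap_single (op : X → X → X) (a : X) {n : ℕ} (x : Fin n → X) :
    starMap op a n (Finsupp.single x 1) = Finsupp.single (fun j => op (x j) a) 1 := by
  simp [starMap]

lemma bdryGen_snoc (op : X → X → X) (a : X) {n : ℕ} (x : Fin (n + 1) → X) :
    bdryGen op (Fin.snoc x a : Fin (n + 2) → X) = hmap a n (bdryGen op x) +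
      (-1 : ℤ) ^ (n + 2) • (Finsupp.single x 1 - Finsupp.single (fun j => op (x j) a) 1) := by
  rw [bdryGen, Fin.sum_univ_castSucc, bdryGen, map_sum]
  congr 1
  · refine Finset.sum_congr rfl fun i _ => ?_
    simp only [Fin.val_castSucc, delF_castSucc_snoc, delS_castSucc_snoc]
    split_ifs <;> simp
  · simp only [Fin.val_last, Nat.add_one_ne_zero, if_false, delF_last_snoc, delS_last_snoc]

lemma bdry_comp_hmap (op : X → X → X) (a : X) (n : ℕ) :
    bdry op (n + 1) ∘ₗ hmap a (n + 1) =
      hmap a n ∘ₗ bdry op n + (-1 : ℤ) ^ (n + 2) • (LinearMap.id - starMap op a (n + 1)) := by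
  ext x : 2
  simp only [LinearMap.comp_apply, Finsupp.lsingle_apply, LinearMap.add_apply,
    LinearMap.smul_apply, LinearMap.sub_apply, LinearMap.id_apply, hmap_single, bdry_single,
    starMap_single, bdryGen_snoc]

end RackChains

theorem hmap_chain_homotopy_general {X : Type*} (op : X → X → X)
    (a : X) (n : ℕ) :
    (bdry op (n + 1)) ∘ₗ (((-1 : ℤ) ^ (n + 2)) • hmap a (n + 1)) +
      (((-1 : ℤ) ^ (n + 1)) • hmap a n) ∘ₗ (bdry op n) =
    LinearMap.id - starMap op a (n + 1) := by
  have hsq : (-1 : ℤ) ^ (n + 2) * (-1) ^ (n + 2) = 1 := by rw [← mul_pow]; simp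
  rw [LinearMap.comp_smul, bdry_comp_hmap, LinearMap.smul_comp]
  linear_combination (norm := module) hsq • (LinearMap.id - starMap op a (n + 1))

/-- For a rack `X` and `a ∈ X`, the maps `(-1)^{n+1} h_a` are a chain homotopy
between the identity and `*_a`:
`∂ ∘ ((-1)^{n+1} h_a) + ((-1)^n h_a) ∘ ∂ = Id - *_a` on `C^R_n(X)`
(stated here on chains of length `n + 1`). -/
theorem hmap_chain_homotopy {X : Type*} (op : X → X → X)
    (hbij : ∀ b : X, Function.Bijective fun a => op a b)
    (hdist : ∀ a b c : X, op (op a b) c = op (op a c) (op b c)) (a : X) (n : ℕ) :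
    (bdry op (n + 1)) ∘ₗ (((-1 : ℤ) ^ (n + 2)) • hmap a (n + 1)) +
      (((-1 : ℤ) ^ (n + 1)) • hmap a n) ∘ₗ (bdry op n) =
    LinearMap.id - starMap op a (n + 1) :=
  hmap_chain_homotopy_general op a n
end

section
/- For p an odd prime, Mochizuki's 3-cocycle θ(x_1,x_2,x_3) = (x_2 - x_1)(2x_3^p - x_2^p - (2x_3 - x_2)^p)/p, evaluated in Z/pZ on the cycle Σ_{i=0}^{p-1} (0, i, i+j) (with lifts to integers), equals -j² (mod p). -/
/-!
By the binomial theorem, `(2(x+y)^p - x^p - (x+2y)^p)/p = ∑_{k<p-1} c_k x^k y^(p-k)` with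
`c_k = C(p,k)(2 - 2^(p-k))/p`; the terms `k = p-1, p` cancel, and `c_0` is an integer by Fermat's
little theorem. Summing `x · x^k` over `x ∈ 𝔽_p` gives `-1` if `p - 1 ∣ k + 1` and `0`
otherwise, so only `k = p - 2` survives, and `c_{p-2} = 1 - p ≡ 1`.
-/

open Finset

theorem FiniteField.sum_pow_eq_sum_pow_units {K : Type*} [Field K] [Fintype K] [DecidableEq K]
    {m : ℕ} (hm : m ≠ 0) : ∑ x : K, x ^ m = ∑ x : Kˣ, (x : K) ^ m := by
  symm
  refine sum_bij_ne_zero (fun x _ _ => (x : K)) (by simp) (fun _ _ _ _ _ _ h => Units.ext h) ?_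
    (by simp)
  intro b _ hb
  exact ⟨Units.mk0 b (by rintro rfl; simp [hm] at hb), mem_univ _, by simpa using hb, rfl⟩

theorem ZMod.sum_range_natCast (p : ℕ) [NeZero p] {M : Type*} [AddCommMonoid M]
    (f : ZMod p → M) :
    ∑ i ∈ range p, f i = ∑ x : ZMod p, f x :=
  sum_nbij' (↑) ZMod.val (fun _ _ => mem_univ _) (fun a _ => mem_range.mpr a.val_lt)
    (fun _ ha => ZMod.val_cast_of_lt (mem_range.mp ha)) (fun a _ => ZMod.natCast_zmod_val a)
    (fun _ _ => rfl)

theorem ZMod.sum_range_natCast_pow (p : ℕ) [Fact p.Prime] {m : ℕ} (hm : m ≠ 0) :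
    ∑ i ∈ range p, (i : ZMod p) ^ m = if p - 1 ∣ m then -1 else 0 := by
  rw [ZMod.sum_range_natCast p (· ^ m), FiniteField.sum_pow_eq_sum_pow_units hm,
    FiniteField.sum_pow_units, ZMod.card]

theorem ZMod.sum_range_natCast_mul_sum_pow (p : ℕ) [Fact p.Prime] (c : ℕ → ZMod p) :
    ∑ i ∈ range p, (i : ZMod p) * ∑ k ∈ range (p - 1), c k * (i : ZMod p) ^ k =
      -c (p - 2) := by
  have hp := (Fact.out : p.Prime).two_le
  have hk : ∀ k ∈ range (p - 1), ∑ i ∈ range p, (i : ZMod p) * (c k * (i : ZMod p) ^ k) =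
      c k * if p - 1 ∣ k + 1 then -1 else 0 := by
    intro k _
    rw [← ZMod.sum_range_natCast_pow p k.succ_ne_zero, mul_sum]
    exact sum_congr rfl fun i _ => by rw [pow_succ]; ring
  simp_rw [mul_sum]
  rw [sum_comm, sum_congr rfl hk, sum_eq_single_of_mem (p - 2) (mem_range.mpr (by omega)),
    if_pos (by rw [show p - 2 + 1 = p - 1 by omega]), mul_neg_one]
  intro k hk hkp
  have : ¬p - 1 ∣ k + 1 := fun hdvd => by
    have := Nat.le_of_dvd k.succ_pos hdvd
    have := mem_range.mp hk
    omega
  rw [if_neg this, mul_zero]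

theorem two_mul_add_pow_sub_pow_sub_add_two_mul_pow {R : Type*} [CommRing R] (n : ℕ) (x y : R) :
    2 * (x + y) ^ n - x ^ n - (x + 2 * y) ^ n =
      ∑ k ∈ range (n - 1), n.choose k * (2 - 2 ^ (n - k)) * x ^ k * y ^ (n - k) := by
  rcases n with _ | n
  · norm_num
  have hterm : ∀ k ∈ range (n + 1 + 1), 2 * (x ^ k * y ^ (n + 1 - k) * (n + 1).choose k) -
      x ^ k * (2 * y) ^ (n + 1 - k) * (n + 1).choose k =
      (n + 1).choose k * (2 - 2 ^ (n + 1 - k)) * x ^ k * y ^ (n + 1 - k) := fun k _ => by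
    rw [mul_pow]; ring
  rw [add_pow, add_pow, mul_sum, sub_right_comm, ← sum_sub_distrib, sum_congr rfl hterm,
    sum_range_succ, sum_range_succ]
  norm_num

def mochizukiCoeff (p k : ℕ) : ℤ := p.choose k * (2 - 2 ^ (p - k)) / p

theorem prime_dvd_choose_mul_two_sub_two_pow {p k : ℕ} (hp : p.Prime) (hk : k < p) :
    (p : ℤ) ∣ p.choose k * (2 - 2 ^ (p - k)) := by
  rcases k.eq_zero_or_pos with rfl | hk0
  · have := Fact.mk hp
    refine Dvd.dvd.mul_left ((ZMod.intCast_zmod_eq_zero_iff_dvd _ p).mp ?_) _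
    push_cast
    rw [Nat.sub_zero, ZMod.pow_card, sub_self]
  · exact Dvd.dvd.mul_right (Int.natCast_dvd_natCast.mpr (hp.dvd_choose_self hk0.ne' hk)) _

theorem mochizuki_quotient_eq {p : ℕ} (hp : p.Prime) (x y : ℤ) :
    (2 * (x + y) ^ p - x ^ p - (2 * (x + y) - x) ^ p) / p =
      ∑ k ∈ range (p - 1), mochizukiCoeff p k * x ^ k * y ^ (p - k) := by
  have hdvd : ∀ k ∈ range (p - 1), (p : ℤ) ∣ p.choose k * (2 - 2 ^ (p - k)) := fun k hk =>
    prime_dvd_choose_mul_two_sub_two_pow hp (by have := mem_range.mp hk; omega)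
  rw [show 2 * (x + y) - x = x + 2 * y by ring, two_mul_add_pow_sub_pow_sub_add_two_mul_pow,
    Int.sum_div fun k hk => ((hdvd k hk).mul_right _).mul_right _]
  refine sum_congr rfl fun k hk => ?_
  rw [mul_assoc, Int.mul_ediv_assoc' _ (hdvd k hk), mochizukiCoeff, mul_assoc]

theorem mochizukiCoeff_sub_two {p : ℕ} (hp : 2 ≤ p) : mochizukiCoeff p (p - 2) = 1 - p := by
  obtain ⟨n, rfl⟩ : ∃ n, p = n + 1 := ⟨p - 1, by omega⟩
  have hchoose : ((n + 1).choose 2 : ℤ) * 2 = (n + 1) * n := by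
    have := Nat.add_one_mul_choose_eq n 1
    rw [Nat.choose_one_right] at this
    exact_mod_cast this.symm
  rw [mochizukiCoeff, Nat.choose_symm (by omega), show n + 1 - (n + 1 - 2) = 2 by omega,
    show ((n + 1).choose 2 : ℤ) * (2 - 2 ^ 2) = (n + 1 : ℕ) * (-n) by
      push_cast; linear_combination -hchoose,
    Int.mul_ediv_cancel_left _ (by positivity)]
  push_cast
  ring

theorem mochizuki_evaluation_general (p : ℕ) (hp : p.Prime) (j : ℤ) :
    ((∑ i ∈ Finset.range p,
        ((i : ℤ) - 0) *
          ((2 * ((i : ℤ) + j) ^ p - (i : ℤ) ^ p - (2 * ((i : ℤ) + j) - (i : ℤ)) ^ p) /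
            (p : ℤ)) : ℤ) : ZMod p) = -(j : ZMod p) ^ 2 := by
  have := Fact.mk hp
  simp_rw [sub_zero, mochizuki_quotient_eq hp]
  push_cast
  simp_rw [mul_right_comm _ (_ ^ _ : ZMod p) ((j : ZMod p) ^ _)]
  rw [ZMod.sum_range_natCast_mul_sum_pow p, mochizukiCoeff_sub_two hp.two_le,
    show p - (p - 2) = 2 by have := hp.two_le; omega]
  push_cast
  rw [ZMod.natCast_self]
  ring

/-- Evaluation of Mochizuki's 3-cocycle
`θ(x₁,x₂,x₃) = (x₂ - x₁)(2x₃^p - x₂^p - (2x₃ - x₂)^p)/p` on the cycle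
`Σ_{i=0}^{p-1} (0, i, i+j)` equals `-j²` in `ZMod p`. -/
theorem mochizuki_evaluation (p : ℕ) (hp : p.Prime) (hodd : Odd p) (j : ℤ) :
    ((∑ i ∈ Finset.range p,
        ((i : ℤ) - 0) *
          ((2 * ((i : ℤ) + j) ^ p - (i : ℤ) ^ p - (2 * ((i : ℤ) + j) - (i : ℤ)) ^ p) /
            (p : ℤ)) : ℤ) : ZMod p) = -(j : ZMod p) ^ 2 :=
  mochizuki_evaluation_general p hp j
end

section
/- For a rack X, the map f: C_n^R(X) → C_{n-1}^R(X) defined by f(x_1,...,x_n) = (-1)^n (x_2,...,x_n) (dropping the first coordinate) is a chain map with respect to the rack boundary. -/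
lemma tail_delF {X : Type*} {n : ℕ} (i : Fin (n + 1)) (x : Fin (n + 2) → X) :
    (fun j : Fin n => delF i.succ x j.succ) = delF i (fun j => x j.succ) := by
  funext j
  simp only [delF, Fin.succ_succAbove_succ]

lemma tail_delS {X : Type*} (op : X → X → X) {n : ℕ} (i : Fin (n + 1)) (x : Fin (n + 2) → X) :
    (fun j : Fin n => delS op i.succ x j.succ) = delS op i (fun j => x j.succ) := by
  funext j
  simp only [delS, Fin.val_succ, Nat.succ_lt_succ_iff, Fin.succ_succAbove_succ,
    ← Fin.succ_castSucc]

lemma tail_delS_zero {X : Type*} (op : X → X → X) {n : ℕ} (x : Fin (n + 2) → X) :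
    (fun j : Fin n => delS op (1 : Fin (n+2)) x j.succ)
      = (fun j : Fin n => delF (1 : Fin (n+2)) x j.succ) := by
  funext j
  simp [delS, delF]

lemma key {X : Type*} (op : X → X → X) (n : ℕ) (x : Fin (n + 2) → X) :
    (Finsupp.lsum ℤ fun y : Fin (n+1) → X => LinearMap.toSpanSingleton ℤ ((Fin n → X) →₀ ℤ)
      (((-1 : ℤ) ^ (n + 1)) • Finsupp.single (fun j : Fin n => y j.succ) 1))
      (bdryGen op x)
    = ((-1 : ℤ) ^ (n + 1 + 1)) • bdryGen op (fun j => x j.succ) := by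
  unfold bdryGen
  rw [map_sum, Finset.smul_sum, Fin.sum_univ_succ]
  simp only [Fin.val_zero, reduceIte, map_zero, zero_add]
  refine Finset.sum_congr rfl fun i _ => ?_
  by_cases hi : i = 0
  · subst hi
    rw [if_neg (by simp), map_smul, map_sub, Finsupp.lsum_single, Finsupp.lsum_single]
    simp [tail_delS_zero op x, LinearMap.toSpanSingleton_apply, sub_self]
  · have hiv : (i : ℕ) ≠ 0 := fun h => hi (Fin.ext h)
    rw [if_neg (by simp), if_neg hiv, map_smul, map_sub,
      Finsupp.lsum_single, Finsupp.lsum_single]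
    simp only [LinearMap.toSpanSingleton_apply, one_smul, tail_delF, tail_delS,
      Fin.val_succ, smul_smul, ← smul_sub]
    congr 1
    ring

/-- For a rack `X`, the map `f(x₁,…,xₙ) = (-1)^n (x₂,…,xₙ)` (dropping the
first coordinate) is a chain map with respect to the rack boundary. -/
theorem fmap_chain_map {X : Type*} (op : X → X → X)
    (hbij : ∀ b : X, Function.Bijective fun a => op a b)
    (hdist : ∀ a b c : X, op (op a b) c = op (op a c) (op b c))
    (f : ∀ m : ℕ, ((Fin (m + 1) → X) →₀ ℤ) →ₗ[ℤ] ((Fin m → X) →₀ ℤ))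
    (hfdef : ∀ m : ℕ, f m = Finsupp.lsum ℤ fun x =>
      LinearMap.toSpanSingleton ℤ _
        (((-1 : ℤ) ^ (m + 1)) • Finsupp.single (fun j : Fin m => x j.succ) 1))
    (n : ℕ) :
    (f n) ∘ₗ (bdry op (n + 1)) = (bdry op n) ∘ₗ (f (n + 1)) := by
  apply Finsupp.lhom_ext
  intro x b
  simp only [LinearMap.comp_apply, hfdef, bdry, Finsupp.lsum_single,
    LinearMap.toSpanSingleton_apply, map_smul, key, one_smul]
end
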